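/- arXiv:2512.24353 — 2 statements merged into one kernel-verified Lean document; each statement's English description precedes it below -/
import Mathlib

section
/- Let n ≥ 1 and let (S_1,…,S_n) be a Γ_n-contraction on a complex Hilbert space H. Let P be the asymptotic limit of S_n*, i.e., the unique positive bounded operator with ⟨P²h,h⟩ = lim_{k→∞} ‖S_n*ᵏh‖² for all h, and let N := closure(range P). Then there exist unique bounded operators Y_1,…,Y_n on N such that Y_i(Ph) = P(S_i*h) for all h ∈ H and i = 1,…,n. Moreover the Y_i pairwise commute, Y_n is an isometry on N, and (Y_1,…,Y_n) is a Γ_n-contraction on N; consequently (Y_1,…,Y_n) is a Γ_n-isometry. -/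
noncomputable section

namespace GammaModel

/-- The closed symmetrized polydisc `Γ_n = s(closed polydisc)`, where the `k`-th coordinate of
`s` is the `k`-th elementary symmetric polynomial. -/
def GammaSet (n : ℕ) : Set (Fin n → ℂ) :=
  {w | ∃ z : Fin n → ℂ, (∀ j, ‖z j‖ ≤ 1) ∧
    ∀ k : Fin n, w k = ∑ t ∈ Finset.powersetCard (k.1 + 1) Finset.univ, ∏ j ∈ t, z j}

/-- Evaluation of a polynomial at a (commuting) tuple of bounded operators: monomials are
evaluated as ordered products `S 0 ^ m 0 * ⋯ * S (n-1) ^ m (n-1)`. -/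
def opEval {n : ℕ} {H : Type*} [NormedAddCommGroup H] [NormedSpace ℂ H]
    (S : Fin n → H →L[ℂ] H) (p : MvPolynomial (Fin n) ℂ) : H →L[ℂ] H :=
  ∑ m ∈ p.support, MvPolynomial.coeff m p • ((List.finRange n).map (fun i => S i ^ m i)).prod

/-- The sup norm of a polynomial over `Γ_n`. -/
def gammaSup (n : ℕ) (p : MvPolynomial (Fin n) ℂ) : ℝ :=
  sSup ((fun w => ‖MvPolynomial.eval w p‖) '' GammaSet n)

/-- A commuting tuple of bounded operators is a `Γ_n`-contraction if `Γ_n` is a spectral set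
for it, i.e. the von Neumann inequality over `Γ_n` holds for all polynomials. -/
def IsGammaContraction {n : ℕ} {H : Type*} [NormedAddCommGroup H] [NormedSpace ℂ H]
    (S : Fin n → H →L[ℂ] H) : Prop :=
  (∀ i j, S i * S j = S j * S i) ∧
  ∀ p : MvPolynomial (Fin n) ℂ, ‖opEval S p‖ ≤ gammaSup n p

/-- A `Γ_n`-isometry: a `Γ_n`-contraction whose last entry is an isometry. -/
def IsGammaIsometry {n : ℕ} {H : Type*} [NormedAddCommGroup H] [NormedSpace ℂ H]
    (hn : 0 < n) (S : Fin n → H →L[ℂ] H) : Prop :=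
  IsGammaContraction S ∧ ∀ x, ‖S ⟨n - 1, Nat.sub_lt hn Nat.one_pos⟩ x‖ = ‖x‖

/-- A `Γ_n`-unitary: a `Γ_n`-contraction whose last entry is a unitary (surjective isometry). -/
def IsGammaUnitary {n : ℕ} {H : Type*} [NormedAddCommGroup H] [NormedSpace ℂ H]
    (hn : 0 < n) (S : Fin n → H →L[ℂ] H) : Prop :=
  IsGammaContraction S ∧ (∀ x, ‖S ⟨n - 1, Nat.sub_lt hn Nat.one_pos⟩ x‖ = ‖x‖) ∧
    Function.Surjective (S ⟨n - 1, Nat.sub_lt hn Nat.one_pos⟩)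

end GammaModel
namespace GammaModel

/-- `P` is the asymptotic limit of `T*`: `P` is positive and
`⟨P²h, h⟩ = lim_k ‖T*ᵏ h‖²` for every `h`. -/
def IsAsymptoticLimit {H : Type*} [NormedAddCommGroup H] [InnerProductSpace ℂ H]
    [CompleteSpace H] (T P : H →L[ℂ] H) : Prop :=
  P.IsPositive ∧ ∀ h : H,
    Filter.Tendsto (fun k : ℕ => ‖(ContinuousLinearMap.adjoint T ^ k) h‖ ^ 2)
      Filter.atTop (nhds ((@inner ℂ H _ ((P * P) h) h).re))

end GammaModel

open GammaModel ContinuousLinearMap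

/-! Since `‖P h‖ = lim ‖S_n*ᵏ h‖` and `S_n*` commutes with every `S_i*`, any operator `A` in the
algebra generated by the `S_i*` satisfies `‖P (A h)‖ ≤ ‖A‖ ‖P h‖`. Hence `P h ↦ P (A h)` is a
well-defined bounded operator on `range P`, extending uniquely to its closure `N`, and norms of
polynomials in the `Y_i` are dominated by those of the same polynomials in the `S_i*`. The tuple
`(S_i*)` is again a `Γ_n`-contraction because `Γ_n` is invariant under complex conjugation, and
`‖P (S_n* h)‖ = ‖P h‖` makes `Y_n` an isometry. -/

open Filter Topology

theorem star_list_prod_map_of_commute {R ι : Type*} [Monoid R] [StarMul R] {f : ι → R}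
    (hf : ∀ i j, Commute (f i) (f j)) (l : List ι) :
    star (l.map f).prod = (l.map fun i => star (f i)).prod := by
  induction l with
  | nil => simp
  | cons i l ih =>
    simp only [List.map_cons, List.prod_cons, star_mul, ih]
    refine (Commute.list_prod_left _ _ fun x hx => ?_).eq
    obtain ⟨j, -, rfl⟩ := List.mem_map.mp hx
    exact (hf i j).star_star.symm

section DenseExtension

variable {𝕜 E F : Type*} [NontriviallyNormedField 𝕜] [NormedAddCommGroup E] [NormedSpace 𝕜 E]
  [NormedAddCommGroup F] [NormedSpace 𝕜 F] {J : E →L[𝕜] F}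

theorem ContinuousLinearMap.denseRange_codRestrict_topologicalClosure (f : E →L[𝕜] F) :
    DenseRange (f.codRestrict (LinearMap.range (f : E →ₗ[𝕜] F)).topologicalClosure
      fun x => Submodule.le_topologicalClosure _ (LinearMap.mem_range_self _ x)) := by
  intro y
  rw [closure_subtype, ← Set.range_comp]
  have hy := y.2
  rwa [← SetLike.mem_coe, Submodule.topologicalClosure_coe] at hy

theorem DenseRange.existsUnique_intertwining [CompleteSpace F] (hJ : DenseRange J)
    {A : E →L[𝕜] E} {C : ℝ} (hA : ∀ x, ‖J (A x)‖ ≤ C * ‖J x‖) :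
    ∃! Y : F →L[𝕜] F, ∀ x, Y (J x) = J (A x) :=
  ⟨(J.toLinearMap ∘ₗ A.toLinearMap).extendOfNorm J, LinearMap.extendOfNorm_eq hJ ⟨C, hA⟩,
    fun Y hY => (LinearMap.extendOfNorm_unique hJ C hA Y (LinearMap.ext hY)).symm⟩

end DenseExtension

namespace GammaModel

section AsymptoticLimit

variable {H : Type*} [NormedAddCommGroup H] [InnerProductSpace ℂ H] [CompleteSpace H]
  {T P : H →L[ℂ] H}

theorem IsAsymptoticLimit.tendsto_norm_sq (hP : IsAsymptoticLimit T P) (h : H) :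
    Tendsto (fun k : ℕ => ‖(adjoint T ^ k) h‖ ^ 2) atTop (𝓝 (‖P h‖ ^ 2)) := by
  have hPP : (inner ℂ ((P * P) h) h).re = ‖P h‖ ^ 2 := by
    rw [mul_apply_eq_comp, hP.1.isSelfAdjoint.isSymmetric.apply_clm]
    exact inner_self_eq_norm_sq (𝕜 := ℂ) _
  simpa only [hPP] using hP.2 h

theorem IsAsymptoticLimit.norm_apply_le (hP : IsAsymptoticLimit T P) {A : H →L[ℂ] H}
    (hA : Commute A (adjoint T)) (h : H) : ‖P (A h)‖ ≤ ‖A‖ * ‖P h‖ := by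
  have hle : ∀ k : ℕ, ‖(adjoint T ^ k) (A h)‖ ^ 2 ≤ ‖A‖ ^ 2 * ‖(adjoint T ^ k) h‖ ^ 2 := by
    intro k
    rw [← mul_pow, ← mul_apply_eq_comp, ← (hA.pow_right k).eq, mul_apply_eq_comp]
    exact pow_le_pow_left₀ (norm_nonneg _) (A.le_opNorm _) 2
  have hsq : ‖P (A h)‖ ^ 2 ≤ (‖A‖ * ‖P h‖) ^ 2 := by
    rw [mul_pow]
    exact le_of_tendsto_of_tendsto' (hP.tendsto_norm_sq (A h))
      ((hP.tendsto_norm_sq h).const_mul _) hle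
  exact le_of_pow_le_pow_left₀ two_ne_zero (by positivity) hsq

theorem IsAsymptoticLimit.norm_apply_adjoint (hP : IsAsymptoticLimit T P) (h : H) :
    ‖P (adjoint T h)‖ = ‖P h‖ := by
  have hshift : Tendsto (fun k : ℕ => ‖(adjoint T ^ k) (adjoint T h)‖ ^ 2) atTop
      (𝓝 (‖P h‖ ^ 2)) := by
    refine ((hP.tendsto_norm_sq h).comp (tendsto_add_atTop_nat 1)).congr fun k => ?_
    rw [Function.comp_apply, pow_succ (adjoint T), mul_apply_eq_comp]
  exact (sq_eq_sq₀ (norm_nonneg _) (norm_nonneg _)).1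
    (tendsto_nhds_unique (hP.tendsto_norm_sq (adjoint T h)) hshift)

end AsymptoticLimit

section OperatorEvaluation

variable {E F : Type*} [NormedAddCommGroup E] [NormedSpace ℂ E] [NormedAddCommGroup F]
  [NormedSpace ℂ F] {n : ℕ} {J : E →L[ℂ] F}

theorem opEval_commute {S : Fin n → E →L[ℂ] E} {B : E →L[ℂ] E} (hB : ∀ i, Commute (S i) B)
    (p : MvPolynomial (Fin n) ℂ) : Commute (opEval S p) B := by
  refine Commute.sum_left _ _ _ fun m _ => (Commute.list_prod_left _ _ fun A hA => ?_).smul_left _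
  obtain ⟨i, -, rfl⟩ := List.mem_map.mp hA
  exact (hB i).pow_left _

theorem opEval_apply_of_intertwining {A : Fin n → E →L[ℂ] E} {Y : Fin n → F →L[ℂ] F}
    (hY : ∀ i x, Y i (J x) = J (A i x)) (p : MvPolynomial (Fin n) ℂ) (x : E) :
    opEval Y p (J x) = J (opEval A p x) := by
  have hpow : ∀ i k x, (Y i ^ k) (J x) = J ((A i ^ k) x) := by
    intro i k
    induction k with
    | zero => simp
    | succ k ih => simp [pow_succ', ih, hY]
  have hprod : ∀ (m : Fin n →₀ ℕ) (l : List (Fin n)) x,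
      (l.map fun i => Y i ^ m i).prod (J x) = J ((l.map fun i => A i ^ m i).prod x) := by
    intro m l
    induction l with
    | nil => simp
    | cons i l ih => simp [ih, hpow]
  simp [opEval, hprod]

theorem IsGammaContraction.of_intertwining {A : Fin n → E →L[ℂ] E}
    {Y : Fin n → F →L[ℂ] F} (hA : IsGammaContraction A) (hJ : DenseRange J)
    (hY : ∀ i x, Y i (J x) = J (A i x))
    (hJA : ∀ p x, ‖J (opEval A p x)‖ ≤ ‖opEval A p‖ * ‖J x‖) : IsGammaContraction Y := by
  refine ⟨fun i j => ?_, fun p => ?_⟩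
  · ext y
    refine hJ.induction_on y (isClosed_eq (by fun_prop) (by fun_prop)) fun x => ?_
    simp only [mul_apply_eq_comp, hY]
    exact congr(J ($(hA.1 i j) x))
  · have hY_le : ∀ y, ‖opEval Y p y‖ ≤ ‖opEval A p‖ * ‖y‖ := fun y =>
      hJ.induction_on y (isClosed_le (by fun_prop) (by fun_prop)) fun x => by
        rw [opEval_apply_of_intertwining hY]
        exact hJA p x
    exact ((opEval Y p).opNorm_le_bound (norm_nonneg _) hY_le).trans (hA.2 p)

end OperatorEvaluation

theorem star_mem_gammaSet {n : ℕ} {w : Fin n → ℂ} (hw : w ∈ GammaSet n) :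
    star w ∈ GammaSet n := by
  obtain ⟨z, hz, hwz⟩ := hw
  refine ⟨star z, fun j => by simpa using hz j, fun k => ?_⟩
  simp [hwz k]

theorem norm_eval_map_conj {n : ℕ} (p : MvPolynomial (Fin n) ℂ) (w : Fin n → ℂ) :
    ‖MvPolynomial.eval w (MvPolynomial.map (starRingEnd ℂ) p)‖
      = ‖MvPolynomial.eval (star w) p‖ := by
  have : MvPolynomial.eval w (MvPolynomial.map (starRingEnd ℂ) p)
      = starRingEnd ℂ (MvPolynomial.eval (star w) p) := by
    rw [MvPolynomial.eval_map, MvPolynomial.eval, MvPolynomial.coe_eval₂Hom,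
      MvPolynomial.eval₂_comp_left]
    congr 1
    ext k
    simp
  rw [this, Complex.norm_conj]

theorem gammaSup_map_conj (n : ℕ) (p : MvPolynomial (Fin n) ℂ) :
    gammaSup n (MvPolynomial.map (starRingEnd ℂ) p) = gammaSup n p := by
  unfold gammaSup
  congr 1
  ext r
  constructor
  · rintro ⟨w, hw, rfl⟩
    exact ⟨star w, star_mem_gammaSet hw, (norm_eval_map_conj p w).symm⟩
  · rintro ⟨w, hw, rfl⟩
    exact ⟨star w, star_mem_gammaSet hw, by simp only [norm_eval_map_conj, star_star]⟩

section Adjoint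

variable {H : Type*} [NormedAddCommGroup H] [InnerProductSpace ℂ H] [CompleteSpace H] {n : ℕ}

theorem adjoint_opEval_adjoint {S : Fin n → H →L[ℂ] H} (hS : ∀ i j, S i * S j = S j * S i)
    (p : MvPolynomial (Fin n) ℂ) :
    adjoint (opEval (fun i => adjoint (S i)) p)
      = opEval S (MvPolynomial.map (starRingEnd ℂ) p) := by
  simp only [← star_eq_adjoint]
  rw [opEval, opEval, MvPolynomial.support_map_of_injective _ (starRingEnd ℂ).injective, star_sum]
  refine Finset.sum_congr rfl fun m _ => ?_
  rw [star_smul, MvPolynomial.coeff_map,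
    star_list_prod_map_of_commute fun i j => (Commute.star_star (hS i j)).pow_pow _ _]
  simp only [star_pow, star_star, starRingEnd_apply]

theorem IsGammaContraction.adjoint {S : Fin n → H →L[ℂ] H} (hS : IsGammaContraction S) :
    IsGammaContraction fun i => ContinuousLinearMap.adjoint (S i) := by
  refine ⟨fun i j => ?_, fun p => ?_⟩
  · simp only [← star_eq_adjoint, ← star_mul, hS.1 j i]
  · rw [← LinearIsometryEquiv.norm_map ContinuousLinearMap.adjoint, adjoint_opEval_adjoint hS.1,
      ← gammaSup_map_conj]
    exact hS.2 _

end Adjoint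

end GammaModel

/-- Let `(S_1, …, S_n)` be a `Γ_n`-contraction, `P` the asymptotic limit of
`S_n*` and `N = closure (range P)`. Then there are unique bounded operators `Y_i` on `N` with
`Y_i (Ph) = P (S_i* h)`; they pairwise commute, `Y_n` is an isometry, and `(Y_1, …, Y_n)` is a
`Γ_n`-contraction, hence a `Γ_n`-isometry, on `N`. -/
theorem canonical_gamma_isometry_on_asymptotic_range {n : ℕ} (hn : 1 ≤ n)
    {H : Type*} [NormedAddCommGroup H] [InnerProductSpace ℂ H] [CompleteSpace H]
    (S : Fin n → H →L[ℂ] H) (hS : IsGammaContraction S)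
    (P : H →L[ℂ] H) (hP : IsAsymptoticLimit (S ⟨n - 1, by omega⟩) P) :
    (∃! Y : Fin n →
        (↥((LinearMap.range (P : H →ₗ[ℂ] H)).topologicalClosure) →L[ℂ] ↥((LinearMap.range (P : H →ₗ[ℂ] H)).topologicalClosure)),
      ∀ (i : Fin n) (h : H),
        (↑(Y i ⟨P h, Submodule.le_topologicalClosure _ (LinearMap.mem_range_self _ h)⟩) : H)
          = P (adjoint (S i) h)) ∧
    (∀ Y : Fin n →
        (↥((LinearMap.range (P : H →ₗ[ℂ] H)).topologicalClosure) →L[ℂ] ↥((LinearMap.range (P : H →ₗ[ℂ] H)).topologicalClosure)),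
      (∀ (i : Fin n) (h : H),
        (↑(Y i ⟨P h, Submodule.le_topologicalClosure _ (LinearMap.mem_range_self _ h)⟩) : H)
          = P (adjoint (S i) h)) →
      IsGammaIsometry (by omega) Y) := by
  set N := (LinearMap.range (P : H →ₗ[ℂ] H)).topologicalClosure
  let J : H →L[ℂ] N :=
    P.codRestrict N fun h => Submodule.le_topologicalClosure _ (LinearMap.mem_range_self _ h)
  have hJ : DenseRange J := P.denseRange_codRestrict_topologicalClosure
  have hSJ (Y : Fin n → N →L[ℂ] N) :
      (∀ i h, (Y i ⟨P h, Submodule.le_topologicalClosure _ (LinearMap.mem_range_self _ h)⟩ : H)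
        = P (adjoint (S i) h)) ↔ ∀ i h, Y i (J h) = J (adjoint (S i) h) := by
    simp only [Subtype.ext_iff]
    rfl
  have hJ_le (A : H →L[ℂ] H) (hA : Commute A (adjoint (S ⟨n - 1, by omega⟩))) (h : H) :
      ‖J (A h)‖ ≤ ‖A‖ * ‖J h‖ :=
    hP.norm_apply_le hA h
  refine ⟨?_, fun Y hY => ?_⟩
  · choose Y hY huniq using fun i => hJ.existsUnique_intertwining (hJ_le _ (hS.adjoint.1 i _))
    exact ⟨Y, (hSJ Y).2 hY, fun Y' hY' => funext fun i => huniq i _ ((hSJ Y').1 hY' i)⟩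
  · rw [hSJ] at hY
    refine ⟨hS.adjoint.of_intertwining hJ hY fun p =>
        hJ_le _ (opEval_commute (fun i => hS.adjoint.1 i _) p),
      fun y => hJ.induction_on y (isClosed_eq (by fun_prop) (by fun_prop)) fun h => ?_⟩
    rw [hY]
    exact hP.norm_apply_adjoint h
end
end

section
/- (Uniqueness of the minimal isometric dilation.) Let T be a contraction on a complex Hilbert space H. For j = 1, 2, let V_{m_j} be an isometry on a complex Hilbert space K_{m_j} and E_{m_j} : H → K_{m_j} a linear isometry with E_{m_j} T* = V_{m_j}* E_{m_j}, such that K_{m_j} equals the closed linear span of ⋃_{k≥0} V_{m_j}ᵏ(E_{m_j}(H)). Then there exists a unique unitary Ξ_u : K_{m_2} → K_{m_1} such that E_{m_1} = Ξ_u ∘ E_{m_2} and Ξ_u V_{m_2}* = V_{m_1}* Ξ_u. -/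
/-!
Both dilations are generated by the orbits `(k, h) ↦ Vᵏ E h`, whose Gram matrices
`⟪Vᵏ E h, Vᵏ⁺ⁿ E g⟫ = ⟪T*ⁿ h, g⟫` depend only on `T`. Two families with dense spans and equal
Gram matrices are matched by a unique unitary: the closed span of the pairs `(f i, g i)` in
`E × F` is the graph of one. As `V*` moves the orbit along a rule that depends only on `T`, this
unitary intertwines `V₂*` and `V₁*`; conversely a unitary intertwining the adjoints intertwines
`V₂` and `V₁`, so it matches the orbits and is the one above.
-/

noncomputable section

open ContinuousLinearMap

open Set Submodule
open scoped InnerProductSpace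

theorem LinearIsometry.surjective_of_le_range {𝕜 E P : Type*} [RCLike 𝕜]
    [NormedAddCommGroup E] [NormedSpace 𝕜 E] [NormedAddCommGroup P] [NormedSpace 𝕜 P]
    [CompleteSpace P] (L : P →ₗᵢ[𝕜] E) {s : Submodule 𝕜 E} (hs : s.topologicalClosure = ⊤)
    (hsL : s ≤ LinearMap.range L.toLinearMap) : Function.Surjective L := by
  have hclosed : IsClosed (LinearMap.range L.toLinearMap : Set E) :=
    L.isometry.isClosedEmbedding.isClosed_range
  refine LinearMap.range_eq_top.1 (eq_top_iff.2 ?_)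
  rw [← hs]
  exact s.topologicalClosure_minimal hsL hclosed

theorem LinearIsometryEquiv.ext_on_of_topologicalClosure_span_eq_top {𝕜 E F : Type*} [RCLike 𝕜]
    [NormedAddCommGroup E] [NormedSpace 𝕜 E] [NormedAddCommGroup F] [NormedSpace 𝕜 F]
    {s : Set E} (hs : (span 𝕜 s).topologicalClosure = ⊤) {Ξ Ξ' : E ≃ₗᵢ[𝕜] F}
    (h : EqOn Ξ Ξ' s) : Ξ = Ξ' := by
  ext x
  have := ContinuousLinearMap.ext_on (dense_iff_topologicalClosure_eq_top.2 hs)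
    (f := ((Ξ : E ≃L[𝕜] F) : E →L[𝕜] F)) (g := ((Ξ' : E ≃L[𝕜] F) : E →L[𝕜] F)) h
  exact congr($this x)

section Gram

variable {𝕜 E F ι : Type*} [RCLike 𝕜] [NormedAddCommGroup E] [InnerProductSpace 𝕜 E]
  [NormedAddCommGroup F] [InnerProductSpace 𝕜 F] {f : ι → E} {g : ι → F}

theorem inner_fst_eq_inner_snd_of_mem_span (hfg : ∀ i j, ⟪f i, f j⟫_𝕜 = ⟪g i, g j⟫_𝕜)
    {u v : E × F} (hu : u ∈ span 𝕜 (range fun i ↦ (f i, g i)))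
    (hv : v ∈ span 𝕜 (range fun i ↦ (f i, g i))) : ⟪u.1, v.1⟫_𝕜 = ⟪u.2, v.2⟫_𝕜 := by
  induction hu, hv using span_induction₂ with
  | mem_mem x y hx hy =>
    obtain ⟨i, rfl⟩ := hx
    obtain ⟨j, rfl⟩ := hy
    exact hfg i j
  | zero_left | zero_right => simp
  | add_left x y z _ _ _ hx hy | add_right x y z _ _ _ hx hy =>
    simp only [Prod.fst_add, Prod.snd_add, inner_add_left, inner_add_right, hx, hy]
  | smul_left r x y _ _ h | smul_right r x y _ _ h =>
    simp only [Prod.smul_fst, Prod.smul_snd, inner_smul_left, inner_smul_right, h]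

theorem norm_fst_eq_norm_snd_of_mem_closure_span (hfg : ∀ i j, ⟪f i, f j⟫_𝕜 = ⟪g i, g j⟫_𝕜)
    {u : E × F} (hu : u ∈ (span 𝕜 (range fun i ↦ (f i, g i))).topologicalClosure) :
    ‖u.1‖ = ‖u.2‖ := by
  have hclosed : IsClosed {u : E × F | ‖u.1‖ = ‖u.2‖} :=
    isClosed_eq (by fun_prop) (by fun_prop)
  refine closure_minimal (fun v hv ↦ ?_) hclosed hu
  rw [mem_ofPred_eq, @norm_eq_sqrt_re_inner 𝕜, @norm_eq_sqrt_re_inner 𝕜,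
    inner_fst_eq_inner_snd_of_mem_span hfg hv hv]

theorem exists_linearIsometryEquiv_of_inner_eq [CompleteSpace E] [CompleteSpace F]
    (hfg : ∀ i j, ⟪f i, f j⟫_𝕜 = ⟪g i, g j⟫_𝕜)
    (hf : (span 𝕜 (range f)).topologicalClosure = ⊤)
    (hg : (span 𝕜 (range g)).topologicalClosure = ⊤) :
    ∃ Ξ : E ≃ₗᵢ[𝕜] F, ∀ i, Ξ (f i) = g i := by
  set G := (span 𝕜 (range fun i ↦ (f i, g i))).topologicalClosure
  have hG : ∀ u : G, ‖(u : E × F)‖ = ‖(u : E × F).1‖ ∧ ‖(u : E × F)‖ = ‖(u : E × F).2‖ :=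
    fun u ↦ by simp [Prod.norm_def, norm_fst_eq_norm_snd_of_mem_closure_span hfg u.2]
  have hmem : ∀ i, (f i, g i) ∈ G := fun i ↦ le_topologicalClosure _ (subset_span ⟨i, rfl⟩)
  let π₁ : G →ₗᵢ[𝕜] E := ⟨(LinearMap.fst 𝕜 E F).comp G.subtype, fun u ↦ (hG u).1.symm⟩
  let π₂ : G →ₗᵢ[𝕜] F := ⟨(LinearMap.snd 𝕜 E F).comp G.subtype, fun u ↦ (hG u).2.symm⟩
  have hπ₁ : Function.Surjective π₁ := π₁.surjective_of_le_range hf <|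
    span_le.2 <| range_subset_iff.2 fun i ↦ ⟨⟨_, hmem i⟩, rfl⟩
  have hπ₂ : Function.Surjective π₂ := π₂.surjective_of_le_range hg <|
    span_le.2 <| range_subset_iff.2 fun i ↦ ⟨⟨_, hmem i⟩, rfl⟩
  let e₁ := LinearIsometryEquiv.ofSurjective π₁ hπ₁
  refine ⟨e₁.symm.trans (LinearIsometryEquiv.ofSurjective π₂ hπ₂), fun i ↦ ?_⟩
  have : e₁.symm (f i) = ⟨_, hmem i⟩ := e₁.symm_apply_eq.2 rfl
  rw [LinearIsometryEquiv.trans_apply, this]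
  rfl

theorem existsUnique_linearIsometryEquiv_of_inner_eq [CompleteSpace E] [CompleteSpace F]
    (hfg : ∀ i j, ⟪f i, f j⟫_𝕜 = ⟪g i, g j⟫_𝕜)
    (hf : (span 𝕜 (range f)).topologicalClosure = ⊤)
    (hg : (span 𝕜 (range g)).topologicalClosure = ⊤) :
    ∃! Ξ : E ≃ₗᵢ[𝕜] F, ∀ i, Ξ (f i) = g i := by
  obtain ⟨Ξ, hΞ⟩ := exists_linearIsometryEquiv_of_inner_eq hfg hf hg
  refine ⟨Ξ, hΞ, fun Ξ' hΞ' ↦ LinearIsometryEquiv.ext_on_of_topologicalClosure_span_eq_top hf ?_⟩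
  rintro _ ⟨i, rfl⟩
  rw [hΞ, hΞ']

end Gram

theorem LinearIsometryEquiv.semiconj_of_semiconj_adjoint {𝕜 E F : Type*} [RCLike 𝕜]
    [NormedAddCommGroup E] [InnerProductSpace 𝕜 E] [CompleteSpace E]
    [NormedAddCommGroup F] [InnerProductSpace 𝕜 F] [CompleteSpace F]
    (U : E ≃ₗᵢ[𝕜] F) {A : E →L[𝕜] E} {B : F →L[𝕜] F}
    (h : Function.Semiconj U (adjoint A) (adjoint B)) : Function.Semiconj U A B := by
  intro x
  refine ext_inner_right 𝕜 fun y ↦ ?_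
  have hy : adjoint A (U.symm y) = U.symm (adjoint B y) := by
    rw [U.eq_symm_apply, h, U.apply_symm_apply]
  rw [U.inner_map_eq_flip, ← adjoint_inner_right A, hy, ← U.inner_map_eq_flip,
    adjoint_inner_right]

section Dilation

variable {𝕜 H K K' : Type*} [RCLike 𝕜] [NormedAddCommGroup H] [InnerProductSpace 𝕜 H]
  [NormedAddCommGroup K] [InnerProductSpace 𝕜 K] [NormedAddCommGroup K'] [InnerProductSpace 𝕜 K']

def dilationOrbit (V : K →L[𝕜] K) (E : H →ₗᵢ[𝕜] K) (p : ℕ × H) : K := (V ^ p.1) (E p.2)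

theorem range_dilationOrbit (V : K →L[𝕜] K) (E : H →ₗᵢ[𝕜] K) :
    range (dilationOrbit V E) = ⋃ k : ℕ, (V ^ k) '' range E := by
  ext x
  simp [dilationOrbit]

theorem dilationOrbit_succ (V : K →L[𝕜] K) (E : H →ₗᵢ[𝕜] K) (k : ℕ) (h : H) :
    dilationOrbit V E (k + 1, h) = V (dilationOrbit V E (k, h)) := by
  rw [dilationOrbit, pow_succ', mul_apply_eq_comp]
  rfl

theorem apply_dilationOrbit_of_semiconj {V : K →L[𝕜] K} {E : H →ₗᵢ[𝕜] K}
    {V' : K' →L[𝕜] K'} {E' : H →ₗᵢ[𝕜] K'} {U : K → K'} (hUE : ∀ h, U (E h) = E' h)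
    (hUV : Function.Semiconj U V V') : ∀ p, U (dilationOrbit V E p) = dilationOrbit V' E' p
  | (0, h) => by simp [dilationOrbit, hUE]
  | (n + 1, h) => by
    rw [dilationOrbit_succ, dilationOrbit_succ, hUV, apply_dilationOrbit_of_semiconj hUE hUV]

variable [CompleteSpace H] [CompleteSpace K] [CompleteSpace K']

def dilationShift (T : H →L[𝕜] H) : ℕ × H → ℕ × H
  | (0, h) => (0, adjoint T h)
  | (n + 1, h) => (n, h)

theorem inner_dilationOrbit_add {T : H →L[𝕜] H} {V : K →L[𝕜] K} {E : H →ₗᵢ[𝕜] K}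
    (hV : ∀ x, ‖V x‖ = ‖x‖) (hE : Function.Semiconj E (adjoint T) (adjoint V))
    (k n : ℕ) (h g : H) :
    ⟪dilationOrbit V E (k, h), dilationOrbit V E (k + n, g)⟫_𝕜 = ⟪(adjoint T ^ n) h, g⟫_𝕜 := by
  let W : K →ₗᵢ[𝕜] K := ⟨V, hV⟩
  have hW : ⇑(V ^ k) = ⇑(W ^ k) := by
    rw [FunLike.coe_pow_eq_iterate, LinearIsometry.coe_pow]
    rfl
  calc ⟪(V ^ k) (E h), (V ^ (k + n)) (E g)⟫_𝕜
      = ⟪(V ^ k) (E h), (V ^ k) ((V ^ n) (E g))⟫_𝕜 := by rw [pow_add, mul_apply_eq_comp]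
    _ = ⟪E h, (V ^ n) (E g)⟫_𝕜 := by rw [hW]; exact (W ^ k).inner_map_map _ _
    _ = ⟪(adjoint V ^ n) (E h), E g⟫_𝕜 := by
      rw [← star_eq_adjoint, ← star_pow, star_eq_adjoint, adjoint_inner_left]
    _ = ⟪E ((adjoint T ^ n) h), E g⟫_𝕜 := by
      rw [FunLike.coe_pow_eq_iterate, FunLike.coe_pow_eq_iterate, (hE.iterate_right n).eq]
    _ = ⟪(adjoint T ^ n) h, g⟫_𝕜 := E.inner_map_map _ _

theorem inner_dilationOrbit_eq {T : H →L[𝕜] H} {V : K →L[𝕜] K} {E : H →ₗᵢ[𝕜] K}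
    {V' : K' →L[𝕜] K'} {E' : H →ₗᵢ[𝕜] K'}
    (hV : ∀ x, ‖V x‖ = ‖x‖) (hE : Function.Semiconj E (adjoint T) (adjoint V))
    (hV' : ∀ x, ‖V' x‖ = ‖x‖) (hE' : Function.Semiconj E' (adjoint T) (adjoint V'))
    (p q : ℕ × H) :
    ⟪dilationOrbit V E p, dilationOrbit V E q⟫_𝕜 =
      ⟪dilationOrbit V' E' p, dilationOrbit V' E' q⟫_𝕜 := by
  obtain ⟨k, h⟩ := p
  obtain ⟨l, g⟩ := q
  rcases le_total k l with hkl | hlk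
  · obtain ⟨n, rfl⟩ := exists_add_of_le hkl
    rw [inner_dilationOrbit_add hV hE, inner_dilationOrbit_add hV' hE']
  · obtain ⟨n, rfl⟩ := exists_add_of_le hlk
    rw [← inner_conj_symm, ← inner_conj_symm (dilationOrbit V' E' _),
      inner_dilationOrbit_add hV hE, inner_dilationOrbit_add hV' hE']

theorem adjoint_apply_dilationOrbit {T : H →L[𝕜] H} {V : K →L[𝕜] K} {E : H →ₗᵢ[𝕜] K}
    (hV : ∀ x, ‖V x‖ = ‖x‖) (hE : Function.Semiconj E (adjoint T) (adjoint V)) :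
    ∀ p, adjoint V (dilationOrbit V E p) = dilationOrbit V E (dilationShift T p)
  | (0, h) => by simp [dilationOrbit, dilationShift, hE h]
  | (n + 1, h) => by
    rw [dilationOrbit_succ, ← comp_apply, (norm_map_iff_adjoint_comp_self V).1 hV]
    rfl

theorem semiconj_adjoint_of_apply_dilationOrbit {T : H →L[𝕜] H} {V : K →L[𝕜] K}
    {E : H →ₗᵢ[𝕜] K} {V' : K' →L[𝕜] K'} {E' : H →ₗᵢ[𝕜] K'}
    (hV : ∀ x, ‖V x‖ = ‖x‖) (hE : Function.Semiconj E (adjoint T) (adjoint V))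
    (hV' : ∀ x, ‖V' x‖ = ‖x‖) (hE' : Function.Semiconj E' (adjoint T) (adjoint V'))
    (hmin : (span 𝕜 (range (dilationOrbit V E))).topologicalClosure = ⊤)
    (U : K ≃ₗᵢ[𝕜] K') (hU : ∀ p, U (dilationOrbit V E p) = dilationOrbit V' E' p) :
    Function.Semiconj U (adjoint V) (adjoint V') := by
  let U' : K →L[𝕜] K' := (U : K ≃L[𝕜] K')
  have : U'.comp (adjoint V) = (adjoint V').comp U' := by
    refine ContinuousLinearMap.ext_on (dense_iff_topologicalClosure_eq_top.2 hmin) ?_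
    rintro _ ⟨p, rfl⟩
    simp only [comp_apply, U', ContinuousLinearEquiv.coe_coe,
      LinearIsometryEquiv.coe_toContinuousLinearEquiv]
    rw [adjoint_apply_dilationOrbit hV hE, hU, hU, adjoint_apply_dilationOrbit hV' hE']
  exact fun x ↦ congr($this x)

end Dilation

theorem minimal_isometric_dilation_unique_general
    {H K1 K2 : Type*} [NormedAddCommGroup H] [InnerProductSpace ℂ H] [CompleteSpace H]
    [NormedAddCommGroup K1] [InnerProductSpace ℂ K1] [CompleteSpace K1]
    [NormedAddCommGroup K2] [InnerProductSpace ℂ K2] [CompleteSpace K2]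
    (T : H →L[ℂ] H)
    (V1 : K1 →L[ℂ] K1) (hV1 : ∀ x, ‖V1 x‖ = ‖x‖)
    (E1 : H →ₗᵢ[ℂ] K1) (hE1 : ∀ h : H, E1 (adjoint T h) = adjoint V1 (E1 h))
    (hmin1 : (Submodule.span ℂ (⋃ k : ℕ, (V1 ^ k) '' Set.range E1)).topologicalClosure = ⊤)
    (V2 : K2 →L[ℂ] K2) (hV2 : ∀ x, ‖V2 x‖ = ‖x‖)
    (E2 : H →ₗᵢ[ℂ] K2) (hE2 : ∀ h : H, E2 (adjoint T h) = adjoint V2 (E2 h))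
    (hmin2 : (Submodule.span ℂ (⋃ k : ℕ, (V2 ^ k) '' Set.range E2)).topologicalClosure = ⊤) :
    ∃! Xi : K2 ≃ₗᵢ[ℂ] K1,
      (∀ h : H, Xi (E2 h) = E1 h) ∧
      (∀ x : K2, Xi (adjoint V2 x) = adjoint V1 (Xi x)) := by
  rw [← range_dilationOrbit] at hmin1 hmin2
  obtain ⟨Ξ, hΞ, huniq⟩ := existsUnique_linearIsometryEquiv_of_inner_eq
    (inner_dilationOrbit_eq hV2 hE2 hV1 hE1) hmin2 hmin1
  refine ⟨Ξ, ⟨fun h ↦ by simpa [dilationOrbit] using hΞ (0, h),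
    semiconj_adjoint_of_apply_dilationOrbit hV2 hE2 hV1 hE1 hmin2 Ξ hΞ⟩, ?_⟩
  rintro Ξ' ⟨hΞ'E, hΞ'V⟩
  exact huniq Ξ' (apply_dilationOrbit_of_semiconj hΞ'E (Ξ'.semiconj_of_semiconj_adjoint hΞ'V))

/-- (Uniqueness of the minimal isometric dilation.) Any two minimal isometric
dilations `(V_{m_1}, E_{m_1})` and `(V_{m_2}, E_{m_2})` of a contraction `T` are related by a
unique unitary `Ξ_u : K_{m_2} → K_{m_1}` with `E_{m_1} = Ξ_u ∘ E_{m_2}` and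
`Ξ_u V_{m_2}* = V_{m_1}* Ξ_u`. -/
theorem minimal_isometric_dilation_unique
    {H K1 K2 : Type*} [NormedAddCommGroup H] [InnerProductSpace ℂ H] [CompleteSpace H]
    [NormedAddCommGroup K1] [InnerProductSpace ℂ K1] [CompleteSpace K1]
    [NormedAddCommGroup K2] [InnerProductSpace ℂ K2] [CompleteSpace K2]
    (T : H →L[ℂ] H) (hT : ‖T‖ ≤ 1)
    (V1 : K1 →L[ℂ] K1) (hV1 : ∀ x, ‖V1 x‖ = ‖x‖)
    (E1 : H →ₗᵢ[ℂ] K1) (hE1 : ∀ h : H, E1 (adjoint T h) = adjoint V1 (E1 h))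
    (hmin1 : (Submodule.span ℂ (⋃ k : ℕ, (V1 ^ k) '' Set.range E1)).topologicalClosure = ⊤)
    (V2 : K2 →L[ℂ] K2) (hV2 : ∀ x, ‖V2 x‖ = ‖x‖)
    (E2 : H →ₗᵢ[ℂ] K2) (hE2 : ∀ h : H, E2 (adjoint T h) = adjoint V2 (E2 h))
    (hmin2 : (Submodule.span ℂ (⋃ k : ℕ, (V2 ^ k) '' Set.range E2)).topologicalClosure = ⊤) :
    ∃! Xi : K2 ≃ₗᵢ[ℂ] K1,
      (∀ h : H, Xi (E2 h) = E1 h) ∧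
      (∀ x : K2, Xi (adjoint V2 x) = adjoint V1 (Xi x)) :=
  minimal_isometric_dilation_unique_general T V1 hV1 E1 hE1 hmin1 V2 hV2 E2 hE2 hmin2
end
end
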